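/- In the q-shuffle algebra V, for all n ≥ 1: Σ_{k=0}^{n} q^{n−2k} G_k ⋆ G̃_{n−k} = q Σ_{k=0}^{n−1} q^{n−1−2k} W_{−k} ⋆ W_{n−k}, and this common value equals [2]_q^{n−1} (xy+yx)^{n−1}(q·xy + q⁻¹·yx), where powers and products on the right are in the free (concatenation) algebra. -/

import Mathlib

noncomputable section

/-- Words in the letters `x` (= `false`) and `y` (= `true`). -/
abbrev Wd := List Bool

/-- The underlying vector space of the free algebra `F⟨x,y⟩`,
with the words as a basis. -/
abbrev V (F : Type*) [Field F] := Wd →₀ F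

/-- The pairing `⟨u,v⟩` on letters: `2` if equal, `-2` if distinct. -/
def pr (a b : Bool) : ℤ := if a = b then 2 else -2

/-- `⟨u₁,b⟩ + ⟨u₂,b⟩ + ⋯ + ⟨u_r,b⟩` for a word `u` and a letter `b`. -/
def wsum (u : Wd) (b : Bool) : ℤ := (u.map fun a => pr a b).sum

variable {F : Type*} [Field F]

/-- Left multiplication by a letter, in the free (concatenation) algebra. -/
def lmul (a : Bool) (f : V F) : V F := Finsupp.mapDomain (fun w => a :: w) f

/-- The `q`-shuffle product of two words (as an element of `V F`), defined by
Rosso's recursion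
`u ⋆ v = u₁((u₂⋯u_r) ⋆ v) + q^{⟨u₁,v₁⟩+⋯+⟨u_r,v₁⟩} v₁(u ⋆ (v₂⋯v_s))`. -/
def sh (q : F) : Wd → Wd → V F
  | [], v => Finsupp.single v 1
  | u@(_ :: _), [] => Finsupp.single u 1
  | a :: u', b :: v' =>
      lmul a (sh q u' (b :: v')) +
        q ^ wsum (a :: u') b • lmul b (sh q (a :: u') v')
  termination_by u v => u.length + v.length
  decreasing_by all_goals (simp only [List.length_cons]; omega)

/-- The `q`-shuffle product on `V F`, extended bilinearly from words. -/
def st (q : F) (f g : V F) : V F :=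
  f.sum fun u cu => g.sum fun v cv => (cu * cv) • sh q u v

/-- The concatenation (free-algebra) product on `V F`. -/
def cm (f g : V F) : V F :=
  f.sum fun u cu => g.sum fun v cv => Finsupp.single (u ++ v) (cu * cv)

/-- Powers with respect to the concatenation product. -/
def cpow (f : V F) : ℕ → V F
  | 0 => Finsupp.single [] 1
  | n + 1 => cm f (cpow f n)

/-- The alternating word `W_{-k} = xyx⋯x` of length `2k+1`. -/
def altX : ℕ → Wd
  | 0 => [false]
  | k + 1 => false :: true :: altX k

/-- The alternating word `W_{k+1} = yxy⋯y` of length `2k+1`. -/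
def altY : ℕ → Wd
  | 0 => [true]
  | k + 1 => true :: false :: altY k

/-- The alternating word `G_k = (yx)^k`. -/
def gw : ℕ → Wd
  | 0 => []
  | k + 1 => true :: false :: gw k

/-- The alternating word `G̃_k = (xy)^k`. -/
def gtw : ℕ → Wd
  | 0 => []
  | k + 1 => false :: true :: gtw k

/-- `W_{-k}` as an element of `V F`. -/
def Wm (F : Type*) [Field F] (k : ℕ) : V F := Finsupp.single (altX k) 1

/-- `W_{k+1}` as an element of `V F`. -/
def Wp (F : Type*) [Field F] (k : ℕ) : V F := Finsupp.single (altY k) 1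

/-- `G_k` as an element of `V F`. -/
def Gn (F : Type*) [Field F] (k : ℕ) : V F := Finsupp.single (gw k) 1

/-- `G̃_k` as an element of `V F`. -/
def Gt (F : Type*) [Field F] (k : ℕ) : V F := Finsupp.single (gtw k) 1

/-!
Write `A_n = Σ_k q^{n-2k} G_k ⋆ G̃_{n-k}` and `B_n = Σ_k q^{n-1-2k} W_{-k} ⋆ W_{n-k}`, together with
the mixed sums `U_m = Σ_j q^{m-2j} W_{-j} ⋆ G̃_{m-j}` and `V_m = Σ_j q^{m-2j} G_j ⋆ W_{m-j+1}`.
Peeling off the first letter with Rosso's recursion gives, in the free algebra,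
`A_{m+1} = q⁻¹ y U_m + q x V_m`, `B_{m+1} = x V_m + q⁻² y U_m`,
`U_m = x A_m + q³ x B_m` and `V_m = y A_m + q⁻¹ y B_m`.
The first two give `A_{m+1} = q B_{m+1}`; feeding this into the last two gives
`A_{m+2} = [2]_q (xy + yx) A_{m+1}`, and `A_1 = q xy + q⁻¹ yx`.
-/

section ShuffleWords

variable (q : F)

lemma sh_nil_left (v : Wd) : sh q [] v = Finsupp.single v 1 := by rw [sh]

lemma sh_nil_right (w : Wd) : sh q w [] = Finsupp.single w 1 := by
  cases w <;> rw [sh]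

lemma sh_cons_cons (a b : Bool) (u v : Wd) :
    sh q (a :: u) (b :: v) =
      lmul a (sh q u (b :: v)) + q ^ wsum (a :: u) b • lmul b (sh q (a :: u) v) := by
  rw [sh]

lemma st_single_single (u v : Wd) :
    st q (Finsupp.single u (1 : F)) (Finsupp.single v 1) = sh q u v := by
  simp [st]

end ShuffleWords

section Words

lemma lmul_add (a : Bool) (f g : V F) : lmul a (f + g) = lmul a f + lmul a g :=
  Finsupp.mapDomain_add

lemma lmul_smul (a : Bool) (c : F) (f : V F) : lmul a (c • f) = c • lmul a f :=
  Finsupp.mapDomain_smul c f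

lemma lmul_sum {ι : Type*} (a : Bool) (s : Finset ι) (f : ι → V F) :
    lmul a (∑ i ∈ s, f i) = ∑ i ∈ s, lmul a (f i) :=
  map_sum (Finsupp.mapDomain.addMonoidHom (List.cons a)) f s

lemma lmul_single (a : Bool) (w : Wd) (c : F) :
    lmul a (Finsupp.single w c) = Finsupp.single (a :: w) c :=
  Finsupp.mapDomain_single

lemma wsum_cons (a : Bool) (u : Wd) (b : Bool) : wsum (a :: u) b = pr a b + wsum u b := by
  simp [wsum]

lemma altX_eq_cons (k : ℕ) : altX k = false :: gw k := by
  induction k with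
  | zero => rfl
  | succ k ih => rw [altX, gw, ih]

lemma altY_eq_cons (k : ℕ) : altY k = true :: gtw k := by
  induction k with
  | zero => rfl
  | succ k ih => rw [altY, gtw, ih]

lemma gw_succ (k : ℕ) : gw (k + 1) = true :: altX k := by rw [gw, altX_eq_cons]

lemma gtw_succ (k : ℕ) : gtw (k + 1) = false :: altY k := by rw [gtw, altY_eq_cons]

lemma wsum_gw (k : ℕ) (b : Bool) : wsum (gw k) b = 0 := by
  induction k with
  | zero => rfl
  | succ k ih => rw [gw, wsum_cons, wsum_cons, ih]; cases b <;> simp [pr]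

lemma wsum_altX (k : ℕ) (b : Bool) : wsum (altX k) b = pr false b := by
  rw [altX_eq_cons, wsum_cons, wsum_gw, add_zero]

end Words

section AlternatingShuffles

variable (q : F)

lemma sh_gw_succ_gtw_succ (k m : ℕ) :
    sh q (gw (k + 1)) (gtw (m + 1)) =
      lmul true (sh q (altX k) (gtw (m + 1))) + lmul false (sh q (gw (k + 1)) (altY m)) := by
  conv_lhs => rw [gw_succ, gtw_succ, sh_cons_cons, ← gw_succ, ← gtw_succ]
  rw [wsum_gw, zpow_zero, one_smul]

lemma sh_altX_altY (k m : ℕ) :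
    sh q (altX k) (altY m) =
      lmul false (sh q (gw k) (altY m)) + q ^ (-2 : ℤ) • lmul true (sh q (altX k) (gtw m)) := by
  conv_lhs => rw [altX_eq_cons, altY_eq_cons, sh_cons_cons, ← altX_eq_cons, ← altY_eq_cons]
  rw [wsum_altX]
  rfl

lemma sh_altX_gtw_succ (k m : ℕ) :
    sh q (altX k) (gtw (m + 1)) =
      lmul false (sh q (gw k) (gtw (m + 1))) + q ^ (2 : ℤ) • lmul false (sh q (altX k) (altY m)) := by
  conv_lhs => rw [altX_eq_cons, gtw_succ, sh_cons_cons, ← altX_eq_cons, ← gtw_succ]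
  rw [wsum_altX]
  rfl

lemma sh_gw_succ_altY (k m : ℕ) :
    sh q (gw (k + 1)) (altY m) =
      lmul true (sh q (altX k) (altY m)) + lmul true (sh q (gw (k + 1)) (gtw m)) := by
  conv_lhs => rw [gw_succ, altY_eq_cons, sh_cons_cons, ← gw_succ, ← altY_eq_cons]
  rw [wsum_gw, zpow_zero, one_smul]

end AlternatingShuffles

section Concatenation

lemma cm_single_one (u : Wd) (g : V F) :
    cm (Finsupp.single u 1) g = Finsupp.mapDomain (u ++ ·) g := by
  rw [cm, Finsupp.sum_single_index]
  · simp [Finsupp.mapDomain]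
  · simp [Finsupp.sum]

lemma cm_add_left (f g h : V F) : cm (f + g) h = cm f h + cm g h := by
  rw [cm, cm, cm, Finsupp.sum_add_index']
  · simp [Finsupp.sum]
  · intro u c₁ c₂
    rw [← Finsupp.sum_add]
    simp only [add_mul, Finsupp.single_add]

lemma cm_mapDomain_append (u : Wd) (f g : V F) :
    cm (Finsupp.mapDomain (u ++ ·) f) g = Finsupp.mapDomain (u ++ ·) (cm f g) := by
  rw [cm, cm, Finsupp.sum_mapDomain_index, Finsupp.mapDomain_sum]
  · refine Finsupp.sum_congr fun w _ => ?_
    rw [Finsupp.mapDomain_sum]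
    refine Finsupp.sum_congr fun v _ => ?_
    rw [Finsupp.mapDomain_single, List.append_assoc]
  · simp [Finsupp.sum]
  · intro w c₁ c₂
    rw [← Finsupp.sum_add]
    simp only [add_mul, Finsupp.single_add]

lemma cm_single_one_assoc (u : Wd) (f g : V F) :
    cm (cm (Finsupp.single u 1) f) g = cm (Finsupp.single u 1) (cm f g) := by
  rw [cm_single_one, cm_mapDomain_append, cm_single_one]

lemma cm_cpow_zero (f g : V F) : cm (cpow f 0) g = g := by
  rw [cpow, cm_single_one]
  exact Finsupp.mapDomain_id

lemma cm_Gt_one_add_Gn_one (g : V F) :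
    cm (Gt F 1 + Gn F 1) g = lmul false (lmul true g) + lmul true (lmul false g) := by
  rw [cm_add_left, Gt, Gn, cm_single_one, cm_single_one, lmul, lmul, lmul, lmul,
    ← Finsupp.mapDomain_comp, ← Finsupp.mapDomain_comp]
  rfl

lemma cm_cpow_succ_Gt_one_add_Gn_one (m : ℕ) (g : V F) :
    cm (cpow (Gt F 1 + Gn F 1) (m + 1)) g =
      cm (Gt F 1 + Gn F 1) (cm (cpow (Gt F 1 + Gn F 1) m) g) := by
  rw [cpow, cm_add_left, cm_add_left, Gt, Gn, cm_single_one_assoc, cm_single_one_assoc,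
    ← cm_add_left]

end Concatenation

section AlternatingSums

open Finset

variable (q : F)

-- `A_n`, `B_n`, `U_m` and `V_m` of the header, on words rather than through `st`.
def sumGG (n : ℕ) : V F :=
  ∑ k ∈ range (n + 1), q ^ ((n : ℤ) - 2 * k) • sh q (gw k) (gtw (n - k))

def sumWW (n : ℕ) : V F :=
  ∑ k ∈ range n, q ^ ((n : ℤ) - 1 - 2 * k) • sh q (altX k) (altY (n - k - 1))

def sumWG (m : ℕ) : V F :=
  ∑ j ∈ range (m + 1), q ^ ((m : ℤ) - 2 * j) • sh q (altX j) (gtw (m - j))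

def sumGW (m : ℕ) : V F :=
  ∑ j ∈ range (m + 1), q ^ ((m : ℤ) - 2 * j) • sh q (gw j) (altY (m - j))

lemma sumGG_one : sumGG q 1 = q • Gt F 1 + q⁻¹ • Gn F 1 := by
  rw [sumGG, sum_range_succ, sum_range_one, gw, gtw, sh_nil_left, sh_nil_right]
  norm_num [Gt, Gn]

lemma sum_st_Gn_Gt (n : ℕ) :
    ∑ k ∈ range (n + 1), q ^ ((n : ℤ) - 2 * (k : ℤ)) • st q (Gn F k) (Gt F (n - k)) =
      sumGG q n := by
  simp only [Gn, Gt, st_single_single, sumGG]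

lemma sum_st_Wm_Wp (n : ℕ) :
    ∑ k ∈ range n, q ^ ((n : ℤ) - 1 - 2 * (k : ℤ)) • st q (Wm F k) (Wp F (n - k - 1)) =
      sumWW q n := by
  simp only [Wm, Wp, st_single_single, sumWW]

variable {q} (hq : q ≠ 0)
include hq

lemma zpow_smul_zpow_smul (a b : ℤ) (f : V F) : q ^ a • q ^ b • f = q ^ (a + b) • f := by
  rw [smul_smul, ← zpow_add₀ hq]

lemma sumWW_succ (m : ℕ) :
    sumWW q (m + 1) = lmul false (sumGW q m) + q ^ (-2 : ℤ) • lmul true (sumWG q m) := by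
  rw [sumWW, sumGW, sumWG, lmul_sum, lmul_sum, smul_sum, ← sum_add_distrib]
  refine sum_congr rfl fun k hk => ?_
  rw [mem_range] at hk
  rw [show m + 1 - k - 1 = m - k by omega,
    show ((m + 1 : ℕ) : ℤ) - 1 - 2 * k = m - 2 * k by push_cast; ring,
    sh_altX_altY, smul_add, lmul_smul, lmul_smul, zpow_smul_zpow_smul hq,
    zpow_smul_zpow_smul hq, add_comm (-2 : ℤ)]

lemma sumWG_eq (m : ℕ) :
    sumWG q m = lmul false (sumGG q m) + q ^ (3 : ℤ) • lmul false (sumWW q m) := by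
  rw [sumWG, sumGG, sumWW, lmul_sum, lmul_sum, smul_sum]
  have hmid : ∀ j ∈ range m,
      q ^ ((m : ℤ) - 2 * j) • sh q (altX j) (gtw (m - j)) =
        lmul false (q ^ ((m : ℤ) - 2 * j) • sh q (gw j) (gtw (m - j))) +
          q ^ (3 : ℤ) • lmul false (q ^ ((m : ℤ) - 1 - 2 * j) • sh q (altX j) (altY (m - j - 1))) := by
    intro j hj
    rw [mem_range] at hj
    rw [show m - j = (m - j - 1) + 1 by omega, sh_altX_gtw_succ, smul_add, lmul_smul, lmul_smul,
      zpow_smul_zpow_smul hq, zpow_smul_zpow_smul hq,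
      show (m : ℤ) - 2 * j + 2 = 3 + ((m : ℤ) - 1 - 2 * j) by ring, Nat.add_sub_cancel]
  have hlast : q ^ ((m : ℤ) - 2 * m) • sh q (altX m) (gtw (m - m)) =
      lmul false (q ^ ((m : ℤ) - 2 * m) • sh q (gw m) (gtw (m - m))) := by
    rw [Nat.sub_self, gtw, sh_nil_right, sh_nil_right, lmul_smul, lmul_single, ← altX_eq_cons]
  rw [sum_range_succ, sum_range_succ, sum_congr rfl hmid, sum_add_distrib, hlast]
  abel

lemma sumGW_eq (m : ℕ) :
    sumGW q m = lmul true (sumGG q m) + q ^ (-1 : ℤ) • lmul true (sumWW q m) := by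
  rw [sumGW, sumGG, sumWW, lmul_sum, lmul_sum, smul_sum]
  have hmid : ∀ i ∈ range m,
      q ^ ((m : ℤ) - 2 * (i + 1 : ℕ)) • sh q (gw (i + 1)) (altY (m - (i + 1))) =
        lmul true (q ^ ((m : ℤ) - 2 * (i + 1 : ℕ)) • sh q (gw (i + 1)) (gtw (m - (i + 1)))) +
          q ^ (-1 : ℤ) • lmul true (q ^ ((m : ℤ) - 1 - 2 * i) • sh q (altX i) (altY (m - i - 1))) := by
    intro i hi
    rw [mem_range] at hi
    rw [show m - (i + 1) = m - i - 1 by omega, sh_gw_succ_altY, smul_add, lmul_smul, lmul_smul,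
      zpow_smul_zpow_smul hq,
      show (m : ℤ) - 2 * (i + 1 : ℕ) = -1 + ((m : ℤ) - 1 - 2 * i) by push_cast; ring, add_comm]
  have hfirst : q ^ ((m : ℤ) - 2 * (0 : ℕ)) • sh q (gw 0) (altY (m - 0)) =
      lmul true (q ^ ((m : ℤ) - 2 * (0 : ℕ)) • sh q (gw 0) (gtw (m - 0))) := by
    rw [gw, sh_nil_left, sh_nil_left, lmul_smul, lmul_single, ← altY_eq_cons]
  rw [sum_range_succ', sum_range_succ', sum_congr rfl hmid, sum_add_distrib, hfirst]
  abel

lemma sumGG_succ (m : ℕ) :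
    sumGG q (m + 1) = q ^ (-1 : ℤ) • lmul true (sumWG q m) + q • lmul false (sumGW q m) := by
  rw [sumGG, sumWG, sumGW, lmul_sum, lmul_sum, smul_sum, smul_sum]
  have hmid : ∀ i ∈ range m,
      q ^ (((m + 1 : ℕ) : ℤ) - 2 * (i + 1 : ℕ)) • sh q (gw (i + 1)) (gtw (m + 1 - (i + 1))) =
        q ^ (-1 : ℤ) • lmul true (q ^ ((m : ℤ) - 2 * i) • sh q (altX i) (gtw (m - i))) +
          q • lmul false
            (q ^ ((m : ℤ) - 2 * (i + 1 : ℕ)) • sh q (gw (i + 1)) (altY (m - (i + 1)))) := by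
    intro i hi
    rw [mem_range] at hi
    rw [show m + 1 - (i + 1) = (m - i - 1) + 1 by omega, sh_gw_succ_gtw_succ, smul_add,
      lmul_smul, lmul_smul, zpow_smul_zpow_smul hq, smul_smul, ← zpow_one_add₀ hq,
      show m - i = (m - i - 1) + 1 by omega, show m - (i + 1) = m - i - 1 by omega,
      show (((m + 1 : ℕ)) : ℤ) - 2 * (i + 1 : ℕ) = -1 + ((m : ℤ) - 2 * i) by push_cast; ring,
      show (-1 : ℤ) + ((m : ℤ) - 2 * i) = 1 + ((m : ℤ) - 2 * (i + 1 : ℕ)) by push_cast; ring,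
      Nat.add_sub_cancel]
  have hfirst : q ^ (((m + 1 : ℕ) : ℤ) - 2 * (0 : ℕ)) • sh q (gw 0) (gtw (m + 1 - 0)) =
      q • lmul false (q ^ ((m : ℤ) - 2 * (0 : ℕ)) • sh q (gw 0) (altY (m - 0))) := by
    rw [gw, sh_nil_left, sh_nil_left, lmul_smul, lmul_single, ← gtw_succ, smul_smul,
      ← zpow_one_add₀ hq]
    congr 2
    push_cast
    ring
  have hlast : q ^ (((m + 1 : ℕ) : ℤ) - 2 * ((m + 1 : ℕ) : ℤ)) • sh q (gw (m + 1)) (gtw (m + 1 - (m + 1))) =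
      q ^ (-1 : ℤ) • lmul true (q ^ ((m : ℤ) - 2 * m) • sh q (altX m) (gtw (m - m))) := by
    rw [Nat.sub_self, Nat.sub_self, gtw, sh_nil_right, sh_nil_right, lmul_smul, lmul_single,
      ← gw_succ, zpow_smul_zpow_smul hq]
    congr 2
    push_cast
    ring
  rw [sum_range_succ', sum_range_succ, sum_range_succ, sum_range_succ', sum_congr rfl hmid,
    sum_add_distrib, hfirst, hlast]
  abel

lemma sumGG_succ_eq_smul_sumWW_succ (m : ℕ) : sumGG q (m + 1) = q • sumWW q (m + 1) := by
  rw [sumGG_succ hq, sumWW_succ hq, smul_add, smul_smul, ← zpow_one_add₀ hq, add_comm]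
  norm_num

lemma sumGG_succ_succ (m : ℕ) :
    sumGG q (m + 2) = (q + q⁻¹) • cm (Gt F 1 + Gn F 1) (sumGG q (m + 1)) := by
  have hWW : sumWW q (m + 1) = q⁻¹ • sumGG q (m + 1) := by
    rw [sumGG_succ_eq_smul_sumWW_succ hq, smul_smul, inv_mul_cancel₀ hq, one_smul]
  rw [sumGG_succ hq, sumWG_eq hq, sumGW_eq hq, hWW, cm_Gt_one_add_Gn_one]
  simp only [lmul_add, lmul_smul, smul_add, smul_smul]
  match_scalars <;> rw [zpow_neg_one] <;> field_simp
  ring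

lemma sumGG_succ_eq (m : ℕ) :
    sumGG q (m + 1) =
      (q + q⁻¹) ^ m • cm (cpow (Gt F 1 + Gn F 1) m) (q • Gt F 1 + q⁻¹ • Gn F 1) := by
  induction m with
  | zero => rw [sumGG_one, pow_zero, one_smul, cm_cpow_zero]
  | succ m ih =>
    rw [sumGG_succ_succ hq, ih, cm_cpow_succ_Gt_one_add_Gn_one, pow_succ', mul_smul,
      cm_Gt_one_add_Gn_one, cm_Gt_one_add_Gn_one]
    simp only [lmul_smul, smul_add]

end AlternatingSums

theorem stmt_10_general {F : Type*} [Field F] (q : F) (hq : q ≠ 0)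
    (n : ℕ) (hn : 1 ≤ n) :
    (∑ k ∈ Finset.range (n + 1),
        q ^ ((n : ℤ) - 2 * (k : ℤ)) • st q (Gn F k) (Gt F (n - k)))
      = q • (∑ k ∈ Finset.range n,
          q ^ ((n : ℤ) - 1 - 2 * (k : ℤ)) • st q (Wm F k) (Wp F (n - k - 1))) ∧
    (∑ k ∈ Finset.range (n + 1),
        q ^ ((n : ℤ) - 2 * (k : ℤ)) • st q (Gn F k) (Gt F (n - k)))
      = ((q + q⁻¹) ^ (n - 1)) •
          cm (cpow (Gt F 1 + Gn F 1) (n - 1)) (q • Gt F 1 + q⁻¹ • Gn F 1) := by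
  obtain ⟨m, rfl⟩ := Nat.exists_eq_add_of_le' hn
  rw [sum_st_Gn_Gt, sum_st_Wm_Wp, Nat.add_sub_cancel]
  exact ⟨sumGG_succ_eq_smul_sumWW_succ hq m, sumGG_succ_eq hq m⟩

/-- For `n ≥ 1`: `Σ_{k=0}^n q^{n−2k} G_k ⋆ G̃_{n−k}
= q Σ_{k=0}^{n−1} q^{n−1−2k} W_{−k} ⋆ W_{n−k}
= [2]_q^{n−1} (xy+yx)^{n−1}(q·xy + q⁻¹·yx)`. -/
theorem stmt_10 {F : Type*} [Field F] (q : F) (hq : q ≠ 0)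
    (hq' : ∀ n : ℕ, 0 < n → q ^ n ≠ 1) (n : ℕ) (hn : 1 ≤ n) :
    (∑ k ∈ Finset.range (n + 1),
        q ^ ((n : ℤ) - 2 * (k : ℤ)) • st q (Gn F k) (Gt F (n - k)))
      = q • (∑ k ∈ Finset.range n,
          q ^ ((n : ℤ) - 1 - 2 * (k : ℤ)) • st q (Wm F k) (Wp F (n - k - 1))) ∧
    (∑ k ∈ Finset.range (n + 1),
        q ^ ((n : ℤ) - 2 * (k : ℤ)) • st q (Gn F k) (Gt F (n - k)))
      = ((q + q⁻¹) ^ (n - 1)) •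
          cm (cpow (Gt F 1 + Gn F 1) (n - 1)) (q • Gt F 1 + q⁻¹ • Gn F 1) :=
  stmt_10_general q hq n hn
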